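/- Each coordinate function x_i of the n-dimensional Peano curve is uniformly distributed: the pushforward of Lebesgue measure on [0,1] under x_i equals Lebesgue measure on [0,1], i.e., μ(x_i^{−1}(A)) = μ(A) for every Borel set A ⊆ [0,1]. -/

import Mathlib

open scoped BigOperators ENNReal

/-- `Φ` : evaluation of a ternary digit sequence (digits at indices `1,2,3,…`). -/
noncomputable def Phi (t : ℕ → ℕ) : ℝ := ∑' k : ℕ, (t (k + 1) : ℝ) / 3 ^ (k + 1)

/-- A sequence of ternary digits (elements of `D = {0,1,2}`). -/
def IsDigitSeq (t : ℕ → ℕ) : Prop := ∀ k, t k ≤ 2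

/-- `S_{i+jn}(𝐭) = ∑_{k=1}^{i+jn} t_k − ∑_{s=0}^{j} t_{i+sn}`. -/
def S (n i j : ℕ) (t : ℕ → ℕ) : ℤ :=
  (∑ k ∈ Finset.Icc 1 (i + j * n), (t k : ℤ)) -
    ∑ s ∈ Finset.range (j + 1), (t (i + s * n) : ℤ)

/-- The operator `ξ(a) = 2 − a`, as a permutation of `ℝ` (so that integer powers
`ξ^m`, `m : ℤ`, make sense). -/
def xiPerm : Equiv.Perm ℝ :=
  ⟨fun a => 2 - a, fun a => 2 - a, fun a => by dsimp; ring, fun a => by dsimp; ring⟩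

/-- `x_i(𝐭) = ∑_{j=0}^∞ ξ^{S_{i+jn}(𝐭)}(t_{i+jn}) / 3^{j+1}`. -/
noncomputable def xcoord (n i : ℕ) (t : ℕ → ℕ) : ℝ :=
  ∑' j : ℕ, ((xiPerm ^ (S n i j t)) ((t (i + j * n) : ℝ))) / 3 ^ (j + 1)

/-- The canonical ternary digit expansion of `t ∈ [0,1]` (all digits `2` for `t = 1`). -/
noncomputable def ternaryDigit (t : ℝ) (k : ℕ) : ℕ :=
  if t = 1 then 2 else (⌊t * 3 ^ k⌋).toNat % 3

/-- The `i`-th coordinate function of the `n`-dimensional Peano curve, as a function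
on `[0,1]` (via the canonical ternary representation; by well-definedness this agrees
with `xcoord` on any ternary representation). -/
noncomputable def peanoCoord (n i : ℕ) (t : ℝ) : ℝ := xcoord n i (ternaryDigit t)

-- Part A : xiPerm and outD
lemma xiPerm_sq : xiPerm * xiPerm = 1 := by
  ext a
  simp [xiPerm, Equiv.Perm.mul_apply]

lemma xiPerm_zpow_apply (m : ℤ) (a : ℝ) :
    (xiPerm ^ m) a = if Even m then a else 2 - a := by
  have h2 : xiPerm ^ (2 : ℤ) = 1 := by
    rw [show ((2:ℤ)) = ((2:ℕ):ℤ) by norm_num, zpow_natCast, pow_two, xiPerm_sq]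
  rcases Int.even_or_odd m with he | ho
  · obtain ⟨k, hk⟩ := he
    rw [if_pos ⟨k, hk⟩, hk, show k + k = 2 * k by ring, zpow_mul, h2, one_zpow]
    rfl
  · obtain ⟨k, hk⟩ := ho
    rw [if_neg (by simp [hk, Int.even_add_one, parity_simps]), hk, zpow_add, zpow_mul, h2, one_zpow, one_mul, zpow_one]
    rfl

/-- The `j`-th output digit, as a natural number. -/
def outD (n i j : ℕ) (u : ℕ → ℕ) : ℕ :=
  if Even (S n i j u) then u (i + j * n) else 2 - u (i + j * n)

lemma outD_le (n i j : ℕ) (u : ℕ → ℕ) (hu : ∀ k, u k ≤ 2) : outD n i j u ≤ 2 := by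
  unfold outD; split
  · exact hu _
  · omega

lemma xcoord_eq (n i : ℕ) (u : ℕ → ℕ) (hu : ∀ k, u k ≤ 2) :
    xcoord n i u = ∑' j : ℕ, (outD n i j u : ℝ) / 3 ^ (j + 1) := by
  unfold xcoord
  congr 1; funext j
  rw [xiPerm_zpow_apply]
  unfold outD
  split
  · rfl
  · rw [Nat.cast_sub (hu _)]; norm_num

-- Part B : geometric series facts
lemma tsum_two_thirds : ∑' j : ℕ, (2 : ℝ) / 3 ^ (j + 1) = 1 := by
  have h : ∀ j : ℕ, (2 : ℝ) / 3 ^ (j + 1) = (2/3) * (1/3) ^ j := by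
    intro j; rw [pow_succ, one_div, inv_pow]; ring
  rw [tsum_congr h, tsum_mul_left, tsum_geometric_of_lt_one (by norm_num) (by norm_num)]
  norm_num

lemma summable_digitSeries (v : ℕ → ℕ) (hv : ∀ j, v j ≤ 2) :
    Summable (fun j : ℕ => (v j : ℝ) / 3 ^ (j + 1)) := by
  have hg : Summable (fun j : ℕ => (2/3 : ℝ) * (1/3) ^ j) :=
    Summable.mul_left _ (summable_geometric_of_lt_one (by norm_num) (by norm_num))
  refine Summable.of_nonneg_of_le (fun j => by positivity) (fun j => ?_) hg
  have h : (2:ℝ)/3 * (1/3)^j = 2 / 3 ^ (j+1) := by rw [pow_succ, one_div, inv_pow]; ring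
  rw [h]
  gcongr
  all_goals first | exact_mod_cast hv _ | norm_num

lemma digitSeries_nonneg (v : ℕ → ℕ) : 0 ≤ ∑' j : ℕ, (v j : ℝ) / 3 ^ (j + 1) :=
  tsum_nonneg fun j => by positivity

lemma digitSeries_le_one (v : ℕ → ℕ) (hv : ∀ j, v j ≤ 2) :
    ∑' j : ℕ, (v j : ℝ) / 3 ^ (j + 1) ≤ 1 := by
  rw [← tsum_two_thirds]
  refine Summable.tsum_le_tsum (fun j => ?_) (summable_digitSeries v hv) ?_
  · gcongr
    all_goals first | exact_mod_cast hv _ | norm_num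
  · have := summable_digitSeries (fun _ => 2) (fun _ => le_refl 2)
    simpa using this

lemma digitSeries_split (v : ℕ → ℕ) (hv : ∀ j, v j ≤ 2) (m : ℕ) :
    ∑' j : ℕ, (v j : ℝ) / 3 ^ (j + 1) =
      (∑ j ∈ Finset.range m, (v j : ℝ) / 3 ^ (j + 1)) +
        ∑' j : ℕ, (v (j + m) : ℝ) / 3 ^ ((j + m) + 1) :=
  (Summable.sum_add_tsum_nat_add m (summable_digitSeries v hv)).symm

lemma digitSeries_tail_nonneg (v : ℕ → ℕ) (m : ℕ) :
    0 ≤ ∑' j : ℕ, (v (j + m) : ℝ) / 3 ^ ((j + m) + 1) :=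
  tsum_nonneg fun j => by positivity

lemma digitSeries_tail_le (v : ℕ → ℕ) (hv : ∀ j, v j ≤ 2) (m : ℕ) :
    ∑' j : ℕ, (v (j + m) : ℝ) / 3 ^ ((j + m) + 1) ≤ 1 / 3 ^ m := by
  have h1 : ∀ j : ℕ, (v (j + m) : ℝ) / 3 ^ ((j + m) + 1) ≤ (1 / 3 ^ m) * (2 / 3 ^ (j + 1)) := by
    intro j
    have h2 : (1 / 3 ^ m : ℝ) * (2 / 3 ^ (j + 1)) = 2 / 3 ^ ((j + m) + 1) := by
      rw [show (j + m) + 1 = (j + 1) + m by ring, pow_add]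
      field_simp
      ring
    rw [h2]
    gcongr
    all_goals first | exact_mod_cast hv _ | norm_num
  calc ∑' j : ℕ, (v (j + m) : ℝ) / 3 ^ ((j + m) + 1)
      ≤ ∑' j : ℕ, (1 / 3 ^ m : ℝ) * (2 / 3 ^ (j + 1)) := by
        refine Summable.tsum_le_tsum h1 ?_ ?_
        · exact (summable_digitSeries v hv).comp_injective (add_left_injective m)
        · exact ((summable_digitSeries (fun _ => 2) (fun _ => le_refl 2)).mul_left
            ((1:ℝ) / 3 ^ m)).congr (fun j => by norm_num)
    _ = 1 / 3 ^ m := by rw [tsum_mul_left, tsum_two_thirds, mul_one]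

-- Part C : ternary digits and cylinders
lemma ternaryDigit_le (t : ℝ) (k : ℕ) : ternaryDigit t k ≤ 2 := by
  unfold ternaryDigit; split <;> omega

lemma ternaryDigit_eq_natFloor {t : ℝ} (ht : t ∈ Set.Ico (0:ℝ) 1) (k : ℕ) :
    ternaryDigit t k = ⌊t * 3 ^ k⌋₊ % 3 := by
  unfold ternaryDigit
  rw [if_neg (by exact ne_of_lt ht.2), Int.floor_toNat]

lemma natFloor_pow_div {t : ℝ} {k N : ℕ} (hk : k ≤ N) :
    ⌊t * 3 ^ k⌋₊ = ⌊t * 3 ^ N⌋₊ / 3 ^ (N - k) := by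
  have h : t * 3 ^ k = (t * 3 ^ N) / ((3 ^ (N - k) : ℕ) : ℝ) := by
    have : (3:ℝ) ^ N = 3 ^ k * 3 ^ (N - k) := by
      rw [← pow_add]; congr 1; omega
    push_cast
    rw [this]
    field_simp
  rw [h, Nat.floor_div_natCast]

lemma natFloor_lt {t : ℝ} (ht : t ∈ Set.Ico (0:ℝ) 1) (N : ℕ) : ⌊t * 3 ^ N⌋₊ < 3 ^ N := by
  rw [Nat.floor_lt (mul_nonneg ht.1 (by positivity))]
  push_cast
  nlinarith [ht.2, pow_pos (show (0:ℝ) < 3 by norm_num) N]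

lemma mem_cyl_iff {t : ℝ} (ht : t ∈ Set.Ico (0:ℝ) 1) (N c : ℕ) :
    t ∈ Set.Ico ((c : ℝ) / 3 ^ N) (((c : ℝ) + 1) / 3 ^ N) ↔ ⌊t * 3 ^ N⌋₊ = c := by
  have h3 : (0:ℝ) < 3 ^ N := by positivity
  rw [Set.mem_Ico, div_le_iff₀ h3, lt_div_iff₀ h3,
    Nat.floor_eq_iff (mul_nonneg ht.1 h3.le)]

/-- The digit sequence read off from a level-`N` cylinder index `c`. -/
def uOf (N c : ℕ) : ℕ → ℕ := fun k => c / 3 ^ (N - k) % 3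

lemma ternaryDigit_eq_uOf {t : ℝ} (ht : t ∈ Set.Ico (0:ℝ) 1) {k N : ℕ} (hk : k ≤ N) :
    ternaryDigit t k = uOf N ⌊t * 3 ^ N⌋₊ k := by
  rw [ternaryDigit_eq_natFloor ht, natFloor_pow_div hk]; rfl

-- Part D : structure of S
def outSet (n i j : ℕ) : Finset ℕ := (Finset.range (j + 1)).image (fun s => i + s * n)

lemma outSet_subset (n i j : ℕ) (hn : 1 ≤ n) (hi : 1 ≤ i) :
    outSet n i j ⊆ Finset.Icc 1 (i + j * n) := by
  intro k hk
  simp only [outSet, Finset.mem_image, Finset.mem_range] at hk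
  obtain ⟨s, hs, rfl⟩ := hk
  simp only [Finset.mem_Icc]
  constructor
  · omega
  · have : s * n ≤ j * n := Nat.mul_le_mul_right n (by omega)
    omega

lemma S_eq_sdiff (n i j : ℕ) (u : ℕ → ℕ) (hn : 1 ≤ n) (hi : 1 ≤ i) :
    S n i j u = ∑ k ∈ Finset.Icc 1 (i + j * n) \ outSet n i j, (u k : ℤ) := by
  rw [Finset.sum_sdiff_eq_sub (outSet_subset n i j hn hi)]
  unfold S
  congr 1
  rw [outSet, Finset.sum_image]
  intro a _ b _ hab
  have := Nat.eq_of_mul_eq_mul_right (show 0 < n by omega) (by simp only at hab; omega : a * n = b * n)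
  exact this

lemma mem_sdiff_not_out {n i j k : ℕ} (hn : 1 ≤ n)
    (hk : k ∈ Finset.Icc 1 (i + j * n) \ outSet n i j) : ∀ s : ℕ, k ≠ i + s * n := by
  intro s hs
  rw [Finset.mem_sdiff, Finset.mem_Icc] at hk
  apply hk.2
  simp only [outSet, Finset.mem_image, Finset.mem_range]
  refine ⟨s, ?_, hs.symm⟩
  -- k = i + s*n ≤ i + j*n ⇒ s ≤ j
  have h1 : s * n ≤ j * n := by omega
  have h2 : s ≤ j := Nat.le_of_mul_le_mul_right h1 (show 0 < n by omega)
  omega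

lemma S_congr_offOut (n i j : ℕ) (u v : ℕ → ℕ) (hn : 1 ≤ n) (hi : 1 ≤ i)
    (h : ∀ k, (∀ s : ℕ, k ≠ i + s * n) → u k = v k) : S n i j u = S n i j v := by
  rw [S_eq_sdiff n i j u hn hi, S_eq_sdiff n i j v hn hi]
  refine Finset.sum_congr rfl fun k hk => ?_
  rw [h k (mem_sdiff_not_out hn hk)]

lemma S_congr_le (n i j : ℕ) (u v : ℕ → ℕ)
    (h : ∀ k, k ≤ i + j * n → u k = v k) : S n i j u = S n i j v := by
  unfold S
  congr 1
  · refine Finset.sum_congr rfl fun k hk => ?_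
    rw [Finset.mem_Icc] at hk
    rw [h k hk.2]
  · refine Finset.sum_congr rfl fun s hs => ?_
    rw [Finset.mem_range] at hs
    have : s * n ≤ j * n := Nat.mul_le_mul_right n (by omega)
    rw [h (i + s * n) (by omega)]

lemma outD_congr_le (n i j : ℕ) (u v : ℕ → ℕ)
    (h : ∀ k, k ≤ i + j * n → u k = v k) : outD n i j u = outD n i j v := by
  unfold outD
  rw [S_congr_le n i j u v h, h (i + j * n) le_rfl]

-- Part E : abstract fiber counting
open Classical in
lemma card_fiber {α : Type*} [Fintype α] [DecidableEq α] {m : ℕ}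
    (emb : Fin m → α) (hemb : Function.Injective emb)
    (τ : Fin m → (α → Fin 3) → Equiv.Perm (Fin 3))
    (hτ : ∀ (j : Fin m) (v w : α → Fin 3),
      (∀ x, (∀ j', emb j' ≠ x) → v x = w x) → τ j v = τ j w)
    (c : Fin m → Fin 3) :
    Fintype.card {v : α → Fin 3 // ∀ j, τ j v (v (emb j)) = c j} =
      3 ^ (Fintype.card α - m) := by
  classical
  set p : α → Prop := fun x => ∃ j', emb j' = x with hp
  let base : ({x : α // ¬ p x} → Fin 3) → (α → Fin 3) := fun w x =>
    if h : p x then 0 else w ⟨x, h⟩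
  have hbase_agree : ∀ (w : {x : α // ¬ p x} → Fin 3) (v : α → Fin 3),
      (∀ x (hx : ¬ p x), v x = w ⟨x, hx⟩) → ∀ j, τ j v = τ j (base w) := by
    intro w v hv j
    apply hτ
    intro x hx
    have hpx : ¬ p x := fun ⟨j', hj'⟩ => hx j' hj'
    rw [hv x hpx]
    simp only [base, dif_neg hpx]
  let vext : ({x : α // ¬ p x} → Fin 3) → (α → Fin 3) := fun w x =>
    if h : p x then (τ h.choose (base w))⁻¹ (c h.choose) else w ⟨x, h⟩
  have hvext_off : ∀ w x (hx : ¬ p x), vext w x = w ⟨x, hx⟩ := by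
    intro w x hx; simp only [vext, dif_neg hx]
  have hvext_tau : ∀ w j, τ j (vext w) = τ j (base w) := by
    intro w j
    exact hbase_agree w (vext w) (fun x hx => hvext_off w x hx) j
  have hvext_at : ∀ w (j : Fin m), vext w (emb j) = (τ j (base w))⁻¹ (c j) := by
    intro w j
    have hpj : p (emb j) := ⟨j, rfl⟩
    simp only [vext, dif_pos hpj]
    have : hpj.choose = j := hemb hpj.choose_spec
    rw [this]
  have hvext_mem : ∀ w (j : Fin m), τ j (vext w) (vext w (emb j)) = c j := by
    intro w j
    rw [hvext_tau w j, hvext_at w j, Equiv.Perm.coe_inv, Equiv.apply_symm_apply]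
  let e : {v : α → Fin 3 // ∀ j, τ j v (v (emb j)) = c j} ≃ ({x : α // ¬ p x} → Fin 3) :=
    { toFun := fun v x => v.1 x.1
      invFun := fun w => ⟨vext w, hvext_mem w⟩
      left_inv := by
        rintro ⟨v, hv⟩
        apply Subtype.ext
        funext x
        show vext (fun y => v y.1) x = v x
        by_cases hx : p x
        · obtain ⟨j, rfl⟩ := hx
          refine (hvext_at (fun y => v y.1) j).trans ?_
          have htj : τ j (base (fun y => v y.1)) = τ j v := by
            symm
            exact hbase_agree (fun y => v y.1) v (fun x hx => rfl) j
          rw [htj, ← hv j, Equiv.Perm.coe_inv, Equiv.symm_apply_apply]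
        · exact hvext_off (fun y => v y.1) x hx
      right_inv := by
        intro w
        funext x
        show vext w x.1 = w x
        rw [hvext_off w x.1 x.2] }
  rw [Fintype.card_congr e, Fintype.card_fun, Fintype.card_fin]
  congr 1
  rw [Fintype.card_subtype_compl]
  congr 1
  have : Fintype.card {x : α // p x} = Fintype.card (Set.range emb) := by
    apply Fintype.card_congr
    exact Equiv.subtypeEquivRight (fun x => by simp [hp, Set.mem_range])
  rw [this, Set.card_range_of_injective hemb, Fintype.card_fin]

-- Part F : instantiation of the counting lemma
def flip3 : Equiv.Perm (Fin 3) := Function.Involutive.toPerm (fun a => 2 - a) (fun a => by fin_cases a <;> rfl)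

lemma flip3_val (a : Fin 3) : ((flip3 a : Fin 3) : ℕ) = 2 - (a : ℕ) := by
  revert a; decide

/-- Digit sequence read off from a vector of `N` ternary digits (positions `1..N`,
position `k` stored at index `N - k`). -/
def uvF {N : ℕ} (v : Fin N → Fin 3) : ℕ → ℕ := fun k =>
  if h : 1 ≤ k ∧ k ≤ N then (v ⟨N - k, by omega⟩ : ℕ) else 0

lemma card_fiber_outD (n i m N : ℕ) (hn : 1 ≤ n) (hi : 1 ≤ i)
    (hjN : ∀ j : ℕ, j < m → i + j * n ≤ N) (w : Fin m → Fin 3) :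
    Fintype.card {v : Fin N → Fin 3 // ∀ j : Fin m, outD n i (j : ℕ) (uvF v) = (w j : ℕ)} =
      3 ^ (N - m) := by
  classical
  have hpos : ∀ j : Fin m, 1 ≤ i + (j : ℕ) * n ∧ i + (j : ℕ) * n ≤ N := fun j =>
    ⟨by omega, hjN _ j.2⟩
  let emb : Fin m → Fin N := fun j => ⟨N - (i + (j : ℕ) * n), by
    have := hpos j; omega⟩
  have hemb : Function.Injective emb := by
    intro a b hab
    have ha := hpos a; have hb := hpos b
    simp only [emb, Fin.mk.injEq] at hab
    have : i + (a : ℕ) * n = i + (b : ℕ) * n := by omega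
    have : (a : ℕ) * n = (b : ℕ) * n := by omega
    have hval : (a : ℕ) = (b : ℕ) := Nat.eq_of_mul_eq_mul_right (by omega) this
    exact Fin.ext hval
  let τ : Fin m → (Fin N → Fin 3) → Equiv.Perm (Fin 3) := fun j v =>
    if Even (S n i (j : ℕ) (uvF v)) then 1 else flip3
  have huv_at : ∀ (v : Fin N → Fin 3) (j : Fin m), uvF v (i + (j : ℕ) * n) = (v (emb j) : ℕ) := by
    intro v j
    have := hpos j
    simp only [uvF, dif_pos (by omega : 1 ≤ i + (j:ℕ)*n ∧ i + (j:ℕ)*n ≤ N)]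
    rfl
  have hτval : ∀ (j : Fin m) (v : Fin N → Fin 3),
      ((τ j v (v (emb j)) : Fin 3) : ℕ) = outD n i (j : ℕ) (uvF v) := by
    intro j v
    simp only [τ, outD, huv_at v j]
    split
    · simp
    · rw [flip3_val]
  have hτ : ∀ (j : Fin m) (v v' : Fin N → Fin 3),
      (∀ x, (∀ j', emb j' ≠ x) → v x = v' x) → τ j v = τ j v' := by
    intro j v v' hagree
    have hS : S n i (j : ℕ) (uvF v) = S n i (j : ℕ) (uvF v') := by
      apply S_congr_offOut n i (j : ℕ) _ _ hn hi
      intro k hk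
      by_cases hkN : 1 ≤ k ∧ k ≤ N
      · simp only [uvF, dif_pos hkN]
        congr 1
        apply hagree
        intro j' hj'
        have hj'pos := hpos j'
        simp only [emb, Fin.mk.injEq] at hj'
        exact hk (j' : ℕ) (by omega)
      · simp only [uvF, dif_neg hkN]
    simp only [τ, hS]
  have key := card_fiber emb hemb τ hτ w
  rw [Fintype.card_fin] at key
  rw [← key]
  apply Fintype.card_congr
  apply Equiv.subtypeEquivRight
  intro v
  constructor
  · intro h j
    have := hτval j v
    rw [h j] at this
    exact Fin.ext this
  · intro h j
    rw [← hτval j v, h j]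

-- Part G : the cylinder sets and their measures
def Nof (n i m : ℕ) : ℕ := i + (m - 1) * n

lemma hjN_of (n i m : ℕ) (hn : 1 ≤ n) : ∀ j : ℕ, j < m → i + j * n ≤ Nof n i m := by
  intro j hj
  unfold Nof
  have : j * n ≤ (m - 1) * n := Nat.mul_le_mul_right n (by omega)
  omega

lemma m_le_Nof (n i m : ℕ) (hn : 1 ≤ n) (hi : 1 ≤ i) (hm : 1 ≤ m) : m ≤ Nof n i m := by
  unfold Nof
  have : (m - 1) * 1 ≤ (m - 1) * n := Nat.mul_le_mul_left _ hn
  omega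

/-- The set of `t ∈ [0,1)` whose first `m` output digits are `w`. -/
def Aset (n i m : ℕ) (w : Fin m → Fin 3) : Set ℝ :=
  {t | t ∈ Set.Ico (0:ℝ) 1 ∧ ∀ j : Fin m, outD n i (j : ℕ) (ternaryDigit t) = (w j : ℕ)}

lemma uOf_eq_uvF (N : ℕ) (a : Fin (3 ^ N)) {k : ℕ} (hk : k ≤ N) :
    uOf N (a : ℕ) k = uvF (fun b => finFunctionFinEquiv.symm a b) k := by
  by_cases h1 : 1 ≤ k ∧ k ≤ N
  · simp only [uvF, dif_pos h1]
    show (a:ℕ) / 3 ^ (N - k) % 3 = _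
    rfl
  · have hk0 : k = 0 := by omega
    subst hk0
    simp only [uvF, dif_neg h1, uOf, Nat.sub_zero]
    rw [Nat.div_eq_of_lt a.2]

lemma outD_uOf_eq (n i j N : ℕ) (hij : i + j * n ≤ N) (a : Fin (3 ^ N)) :
    outD n i j (uOf N (a : ℕ)) = outD n i j (uvF (fun b => finFunctionFinEquiv.symm a b)) := by
  apply outD_congr_le
  intro k hk
  exact uOf_eq_uvF N a (le_trans hk hij)

lemma card_filter_predA (n i m : ℕ) (hn : 1 ≤ n) (hi : 1 ≤ i) (w : Fin m → Fin 3) :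
    (Finset.univ.filter (fun a : Fin (3 ^ Nof n i m) =>
        ∀ j : Fin m, outD n i (j : ℕ) (uOf (Nof n i m) (a : ℕ)) = (w j : ℕ))).card =
      3 ^ (Nof n i m - m) := by
  classical
  rw [← Fintype.card_subtype]
  rw [Fintype.card_congr (Equiv.subtypeEquiv (p := fun a : Fin (3 ^ Nof n i m) =>
    ∀ j : Fin m, outD n i (j : ℕ) (uOf (Nof n i m) (a : ℕ)) = (w j : ℕ))
    (q := fun v : Fin (Nof n i m) → Fin 3 =>
      ∀ j : Fin m, outD n i (j : ℕ) (uvF v) = (w j : ℕ))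
    finFunctionFinEquiv.symm (fun a => by
      constructor
      · intro h j; rw [← outD_uOf_eq n i (j:ℕ) _ (hjN_of n i m hn (j:ℕ) j.2) a]; exact h j
      · intro h j; rw [outD_uOf_eq n i (j:ℕ) _ (hjN_of n i m hn (j:ℕ) j.2) a]; exact h j))]
  exact card_fiber_outD n i m (Nof n i m) hn hi (hjN_of n i m hn) w

lemma Aset_eq_biUnion (n i m : ℕ) (hn : 1 ≤ n) (hi : 1 ≤ i) (hm : 1 ≤ m) (w : Fin m → Fin 3) :
    Aset n i m w = ⋃ a ∈ Finset.univ.filter (fun a : Fin (3 ^ Nof n i m) =>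
      ∀ j : Fin m, outD n i (j : ℕ) (uOf (Nof n i m) (a : ℕ)) = (w j : ℕ)),
        Set.Ico (((a:ℕ) : ℝ) / 3 ^ Nof n i m) ((((a:ℕ) : ℝ) + 1) / 3 ^ Nof n i m) := by
  classical
  set N := Nof n i m with hN
  ext t
  simp only [Set.mem_iUnion, exists_prop, Finset.mem_filter, Finset.mem_univ, true_and]
  constructor
  · rintro ⟨ht, hd⟩
    refine ⟨⟨⌊t * 3 ^ N⌋₊, natFloor_lt ht N⟩, fun j => ?_, ?_⟩
    · have : outD n i (j:ℕ) (uOf N ⌊t * 3 ^ N⌋₊) = outD n i (j:ℕ) (ternaryDigit t) := by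
        apply outD_congr_le
        intro k hk
        exact (ternaryDigit_eq_uOf ht (le_trans hk (hjN_of n i m hn (j:ℕ) j.2))).symm
      rw [this]
      exact hd j
    · exact (mem_cyl_iff ht N _).mpr rfl
  · rintro ⟨a, ha, hta⟩
    have h3 : (0:ℝ) < 3 ^ N := by positivity
    have ht : t ∈ Set.Ico (0:ℝ) 1 := by
      rcases hta with ⟨h1, h2⟩
      constructor
      · have : (0:ℝ) ≤ ((a:ℕ):ℝ) / 3 ^ N := by positivity
        linarith
      · have ha3 : ((a:ℕ):ℝ) + 1 ≤ 3 ^ N := by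
          have := a.2
          have : ((a:ℕ):ℝ) + 1 ≤ ((3:ℝ) ^ N) := by
            exact_mod_cast Nat.succ_le_of_lt a.2
          linarith
        have : (((a:ℕ):ℝ) + 1) / 3 ^ N ≤ 1 := by
          rw [div_le_one h3]; linarith
        linarith
    have hfl : ⌊t * 3 ^ N⌋₊ = (a:ℕ) := (mem_cyl_iff ht N (a:ℕ)).mp hta
    refine ⟨ht, fun j => ?_⟩
    have : outD n i (j:ℕ) (ternaryDigit t) = outD n i (j:ℕ) (uOf N (a:ℕ)) := by
      apply outD_congr_le
      intro k hk
      rw [ternaryDigit_eq_uOf ht (le_trans hk (hjN_of n i m hn (j:ℕ) j.2)), hfl]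
    rw [this]
    exact ha j

lemma Aset_measurable (n i m : ℕ) (hn : 1 ≤ n) (hi : 1 ≤ i) (hm : 1 ≤ m) (w : Fin m → Fin 3) :
    MeasurableSet (Aset n i m w) := by
  rw [Aset_eq_biUnion n i m hn hi hm w]
  exact (Finset.univ.filter _).measurableSet_biUnion fun b _ => measurableSet_Ico

lemma Aset_volume (n i m : ℕ) (hn : 1 ≤ n) (hi : 1 ≤ i) (hm : 1 ≤ m) (w : Fin m → Fin 3) :
    MeasureTheory.volume (Aset n i m w) = ENNReal.ofReal (1 / 3 ^ m) := by
  classical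
  set N := Nof n i m with hN
  rw [Aset_eq_biUnion n i m hn hi hm w]
  rw [MeasureTheory.measure_biUnion_finset ?disj (fun b _ => measurableSet_Ico)]
  case disj =>
    intro a _ b _ hab
    have h3 : (0:ℝ) < 3 ^ N := by positivity
    apply Set.Ico_disjoint_Ico.mpr
    rcases lt_or_gt_of_ne (show (a:ℕ) ≠ (b:ℕ) from fun h => hab (Fin.ext h)) with h | h
    · calc min ((((a:ℕ):ℝ) + 1) / 3 ^ N) ((((b:ℕ):ℝ) + 1) / 3 ^ N)
          ≤ (((a:ℕ):ℝ) + 1) / 3 ^ N := min_le_left _ _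
        _ ≤ ((b:ℕ):ℝ) / 3 ^ N := by gcongr; exact_mod_cast h
        _ ≤ max (((a:ℕ):ℝ) / 3 ^ N) (((b:ℕ):ℝ) / 3 ^ N) := le_max_right _ _
    · calc min ((((a:ℕ):ℝ) + 1) / 3 ^ N) ((((b:ℕ):ℝ) + 1) / 3 ^ N)
          ≤ (((b:ℕ):ℝ) + 1) / 3 ^ N := min_le_right _ _
        _ ≤ ((a:ℕ):ℝ) / 3 ^ N := by gcongr; exact_mod_cast h
        _ ≤ max (((a:ℕ):ℝ) / 3 ^ N) (((b:ℕ):ℝ) / 3 ^ N) := le_max_left _ _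
  · have hvol : ∀ a : Fin (3 ^ N), MeasureTheory.volume
        (Set.Ico (((a:ℕ):ℝ) / 3 ^ N) ((((a:ℕ):ℝ) + 1) / 3 ^ N)) = ENNReal.ofReal (1 / 3 ^ N) := by
      intro a; rw [Real.volume_Ico]; congr 1; ring
    rw [Finset.sum_congr rfl (fun a _ => hvol a), Finset.sum_const, nsmul_eq_mul,
      card_filter_predA n i m hn hi w]
    have hmN : m ≤ N := m_le_Nof n i m hn hi hm
    rw [← ENNReal.ofReal_natCast (3 ^ (N - m)), ← ENNReal.ofReal_mul (by positivity)]
    congr 1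
    have h1 : (3:ℝ) ^ N = 3 ^ (N - m) * 3 ^ m := by
      rw [← pow_add]; congr 1; omega
    push_cast
    rw [h1]
    have h2 : (0:ℝ) < 3 ^ (N-m) := by positivity
    have h3 : (0:ℝ) < 3 ^ m := by positivity
    field_simp

-- Part H : prefix-code value bounds and counting
def cF {m : ℕ} (w : Fin m → Fin 3) : ℕ := ∑ j : Fin m, (w j : ℕ) * 3 ^ (m - 1 - (j : ℕ))

lemma peanoCoord_repr (n i : ℕ) (t : ℝ) :
    peanoCoord n i t = ∑' j : ℕ, (outD n i j (ternaryDigit t) : ℝ) / 3 ^ (j + 1) :=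
  xcoord_eq n i (ternaryDigit t) (fun k => ternaryDigit_le t k)

lemma peanoCoord_nonneg (n i : ℕ) (t : ℝ) : 0 ≤ peanoCoord n i t := by
  rw [peanoCoord_repr]; exact digitSeries_nonneg _

lemma peanoCoord_le_one (n i : ℕ) (t : ℝ) : peanoCoord n i t ≤ 1 := by
  rw [peanoCoord_repr]
  exact digitSeries_le_one _ (fun j => outD_le n i j _ (fun k => ternaryDigit_le t k))

lemma Aset_bounds (n i m : ℕ) (w : Fin m → Fin 3) {t : ℝ} (ht : t ∈ Aset n i m w) :
    (cF w : ℝ) / 3 ^ m ≤ peanoCoord n i t ∧ peanoCoord n i t ≤ ((cF w : ℝ) + 1) / 3 ^ m := by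
  set v : ℕ → ℕ := fun j => outD n i j (ternaryDigit t) with hv
  have hv2 : ∀ j, v j ≤ 2 := fun j => outD_le n i j _ (fun k => ternaryDigit_le t k)
  have hrepr : peanoCoord n i t = ∑' j : ℕ, (v j : ℝ) / 3 ^ (j + 1) := peanoCoord_repr n i t
  have hsplit := digitSeries_split v hv2 m
  have hpartial : ∑ j ∈ Finset.range m, (v j : ℝ) / 3 ^ (j + 1) = (cF w : ℝ) / 3 ^ m := by
    have hcF : cF w = ∑ j ∈ Finset.range m, v j * 3 ^ (m - 1 - j) := by
      unfold cF
      calc ∑ j : Fin m, (w j : ℕ) * 3 ^ (m - 1 - (j:ℕ))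
          = ∑ j : Fin m, v (j:ℕ) * 3 ^ (m - 1 - (j:ℕ)) :=
            Finset.sum_congr rfl fun j _ => by rw [← ht.2 j]
        _ = ∑ j ∈ Finset.range m, v j * 3 ^ (m - 1 - j) :=
            Fin.sum_univ_eq_sum_range (fun j => v j * 3 ^ (m - 1 - j)) m
    rw [hcF]
    push_cast
    rw [Finset.sum_div]
    refine Finset.sum_congr rfl fun j hj => ?_
    rw [Finset.mem_range] at hj
    have h1 : (3:ℝ) ^ m = 3 ^ (j + 1) * 3 ^ (m - 1 - j) := by
      rw [← pow_add]; congr 1; omega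
    rw [h1]
    have h2 : (0:ℝ) < 3 ^ (j+1) := by positivity
    have h3 : (0:ℝ) < 3 ^ (m-1-j) := by positivity
    field_simp
  have htail1 := digitSeries_tail_nonneg v m
  have htail2 := digitSeries_tail_le v hv2 m
  rw [hrepr, hsplit, hpartial]
  constructor
  · linarith
  · rw [add_div]
    linarith

lemma mem_Aset_self (n i m : ℕ) {t : ℝ} (ht : t ∈ Set.Ico (0:ℝ) 1) :
    t ∈ Aset n i m (fun j => ⟨outD n i (j : ℕ) (ternaryDigit t),
      lt_of_le_of_lt (outD_le n i _ _ (fun k => ternaryDigit_le t k)) (by norm_num)⟩) :=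
  ⟨ht, fun j => rfl⟩

lemma Aset_disjoint (n i m : ℕ) {w w' : Fin m → Fin 3} (hww : w ≠ w') :
    Disjoint (Aset n i m w) (Aset n i m w') := by
  rw [Set.disjoint_left]
  rintro t ⟨_, h1⟩ ⟨_, h2⟩
  apply hww
  funext j
  exact Fin.ext ((h1 j).symm.trans (h2 j))

/-- `cF` as an equivalence onto `Fin (3^m)`. -/
def cFEquiv (m : ℕ) : (Fin m → Fin 3) ≃ Fin (3 ^ m) :=
  (Equiv.arrowCongr (Fin.revPerm) (Equiv.refl (Fin 3))).trans finFunctionFinEquiv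

lemma cF_eq (m : ℕ) (w : Fin m → Fin 3) : cF w = ((cFEquiv m w : Fin (3 ^ m)) : ℕ) := by
  show cF w = ((finFunctionFinEquiv (fun b => w (Fin.revPerm.symm b)) : Fin (3^m)) : ℕ)
  rw [finFunctionFinEquiv_apply]
  unfold cF
  rw [← Equiv.sum_comp (Fin.revPerm) (fun b => (w (Fin.revPerm.symm b) : ℕ) * 3 ^ (b : ℕ))]
  refine Finset.sum_congr rfl fun j _ => ?_
  simp only [Fin.revPerm_symm, Fin.revPerm_apply, Fin.rev_rev, Fin.val_rev]
  congr 2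
  omega

lemma card_filter_comp_equiv {α β : Type*} [Fintype α] [Fintype β] [DecidableEq α]
    [DecidableEq β] (e : α ≃ β) (p : β → Prop) [DecidablePred p] :
    (Finset.univ.filter (fun a => p (e a))).card = (Finset.univ.filter p).card := by
  rw [← Fintype.card_subtype, ← Fintype.card_subtype]
  exact Fintype.card_congr (e.subtypeEquiv (fun a => Iff.rfl))

lemma card_filter_fin_lt (M K : ℕ) :
    (Finset.univ.filter (fun c : Fin M => (c : ℕ) < K)).card = min K M := by
  classical
  have h1 : (Finset.univ.filter (fun c : Fin M => (c : ℕ) < K)).card =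
      ((Finset.range M).filter (fun k => k < K)).card := by
    refine Finset.card_bij (fun c _ => (c : ℕ)) ?_ ?_ ?_
    · intro c hc
      rw [Finset.mem_filter] at hc ⊢
      exact ⟨Finset.mem_range.mpr c.2, hc.2⟩
    · intro a _ b _ hab; exact Fin.ext hab
    · intro k hk
      rw [Finset.mem_filter, Finset.mem_range] at hk
      exact ⟨⟨k, hk.1⟩, Finset.mem_filter.mpr ⟨Finset.mem_univ _, hk.2⟩, rfl⟩
  rw [h1]
  have h2 : (Finset.range M).filter (fun k => k < K) = Finset.range (min K M) := by
    ext k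
    simp only [Finset.mem_filter, Finset.mem_range, lt_min_iff]
    omega
  rw [h2, Finset.card_range]

-- Part I : measurability
lemma measurable_ternaryDigit (k : ℕ) : Measurable fun t : ℝ => ternaryDigit t k := by
  unfold ternaryDigit
  apply Measurable.ite
  · exact measurableSet_eq
  · exact measurable_const
  · exact (Measurable.of_discrete (f := fun z : ℤ => z.toNat % 3)).comp ((measurable_id.mul_const ((3:ℝ) ^ k)).floor)

lemma measurable_S (n i j : ℕ) : Measurable fun t : ℝ => S n i j (ternaryDigit t) := by
  unfold S
  apply Measurable.sub
  · apply Finset.measurable_sum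
    intro k _
    exact (Measurable.of_discrete (f := fun d : ℕ => (d : ℤ))).comp (measurable_ternaryDigit k)
  · apply Finset.measurable_sum
    intro s _
    exact (Measurable.of_discrete (f := fun d : ℕ => (d : ℤ))).comp (measurable_ternaryDigit (i + s * n))

lemma measurable_outD (n i j : ℕ) : Measurable fun t : ℝ => outD n i j (ternaryDigit t) := by
  unfold outD
  apply Measurable.ite
  · show MeasurableSet {t : ℝ | Even (S n i j (ternaryDigit t))}
    have h1 : MeasurableSet {z : ℤ | Even z} := MeasurableSet.of_discrete
    have h2 := (measurable_S n i j) h1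
    simpa [Set.preimage] using h2
  · exact measurable_ternaryDigit _
  · exact (Measurable.of_discrete (f := fun d : ℕ => 2 - d)).comp (measurable_ternaryDigit _)

lemma measurable_peanoCoord (n i : ℕ) : Measurable (peanoCoord n i) := by
  have hms : ∀ M : ℕ, Measurable fun t : ℝ =>
      ∑ j ∈ Finset.range M, (outD n i j (ternaryDigit t) : ℝ) / 3 ^ (j + 1) := by
    intro M
    apply Finset.measurable_sum
    intro j _
    exact ((Measurable.of_discrete (f := fun d : ℕ => (d : ℝ))).comp (measurable_outD n i j)).div_const _
  apply measurable_of_tendsto_metrizable hms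
  rw [tendsto_pi_nhds]
  intro t
  rw [peanoCoord_repr]
  exact (summable_digitSeries _ (fun j => outD_le n i j _ (fun k => ternaryDigit_le t k))).hasSum.tendsto_sum_nat

-- Part J : the CDF of peanoCoord is uniform
lemma cdf_peanoCoord (n i : ℕ) (hn : 1 ≤ n) (hi : 1 ≤ i) {x : ℝ} (hx0 : 0 ≤ x) (hx1 : x ≤ 1) :
    MeasureTheory.volume {t : ℝ | t ∈ Set.Ico (0:ℝ) 1 ∧ peanoCoord n i t ≤ x} =
      ENNReal.ofReal x := by
  classical
  set T := {t : ℝ | t ∈ Set.Ico (0:ℝ) 1 ∧ peanoCoord n i t ≤ x} with hT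
  have key : ∀ m : ℕ, 1 ≤ m →
      ENNReal.ofReal (x - 1 / 3 ^ m) ≤ MeasureTheory.volume T ∧
        MeasureTheory.volume T ≤ ENNReal.ofReal (x + 1 / 3 ^ m) := by
    intro m hm
    set K := ⌊x * 3 ^ m⌋₊ with hK
    have h3m : (0:ℝ) < 3 ^ m := by positivity
    have hxm : (0:ℝ) ≤ x * 3 ^ m := by positivity
    have hK_le : (K : ℝ) ≤ x * 3 ^ m := Nat.floor_le hxm
    have hK_gt : x * 3 ^ m < (K : ℝ) + 1 := by
      have := Nat.lt_floor_add_one (x * 3 ^ m); push_cast at this ⊢; linarith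
    have hKM : K ≤ 3 ^ m := by
      have hx3 : x * 3 ^ m ≤ 3 ^ m := by nlinarith
      calc K ≤ ⌊(3:ℝ) ^ m⌋₊ := Nat.floor_le_floor hx3
        _ = 3 ^ m := by
            rw [show ((3:ℝ) ^ m) = ((3 ^ m : ℕ) : ℝ) by push_cast; ring, Nat.floor_natCast]
    set L := Finset.univ.filter (fun w : Fin m → Fin 3 => (cF w : ℝ) + 1 ≤ x * 3 ^ m) with hL
    set U := Finset.univ.filter (fun w : Fin m → Fin 3 => (cF w : ℝ) ≤ x * 3 ^ m) with hU
    have hcond1 : ∀ w : Fin m → Fin 3,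
        ((cF w : ℝ) + 1 ≤ x * 3 ^ m) ↔ ((cFEquiv m w : ℕ) < K) := by
      intro w
      rw [show ((cF w : ℝ) + 1) = ((cF w + 1 : ℕ) : ℝ) by push_cast; ring]
      rw [← Nat.le_floor_iff hxm, ← hK, cF_eq m w]
      omega
    have hcond2 : ∀ w : Fin m → Fin 3,
        ((cF w : ℝ) ≤ x * 3 ^ m) ↔ ((cFEquiv m w : ℕ) < K + 1) := by
      intro w
      rw [show ((cF w : ℝ)) = ((cF w : ℕ) : ℝ) by push_cast; ring]
      rw [← Nat.le_floor_iff hxm, ← hK, cF_eq m w]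
      omega
    have hLcard : L.card = K := by
      rw [hL, Finset.filter_congr (fun w _ => by rw [hcond1 w])]
      rw [card_filter_comp_equiv (cFEquiv m) (fun c : Fin (3 ^ m) => (c : ℕ) < K)]
      rw [card_filter_fin_lt]
      exact min_eq_left hKM
    have hUcard : U.card ≤ K + 1 := by
      rw [hU, Finset.filter_congr (fun w _ => by rw [hcond2 w])]
      rw [card_filter_comp_equiv (cFEquiv m) (fun c : Fin (3 ^ m) => (c : ℕ) < K + 1)]
      rw [card_filter_fin_lt]
      exact min_le_left _ _
    have hdisj : (↑L : Set (Fin m → Fin 3)).PairwiseDisjoint (Aset n i m) :=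
      fun a _ b _ hab => Aset_disjoint n i m hab
    have hdisjU : (↑U : Set (Fin m → Fin 3)).PairwiseDisjoint (Aset n i m) :=
      fun a _ b _ hab => Aset_disjoint n i m hab
    have hmeasA : ∀ w : Fin m → Fin 3, MeasurableSet (Aset n i m w) :=
      fun w => Aset_measurable n i m hn hi hm w
    constructor
    · -- lower bound
      have hsub1 : (⋃ w ∈ L, Aset n i m w) ⊆ T := by
        intro t ht
        rw [Set.mem_iUnion₂] at ht
        obtain ⟨w, hwL, htw⟩ := ht
        rw [hL, Finset.mem_filter] at hwL
        refine ⟨htw.1, ?_⟩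
        refine le_trans (Aset_bounds n i m w htw).2 ?_
        rw [div_le_iff₀ h3m]
        linarith [hwL.2]
      have hvol1 : MeasureTheory.volume (⋃ w ∈ L, Aset n i m w) =
          (L.card : ℝ≥0∞) * ENNReal.ofReal (1 / 3 ^ m) := by
        rw [MeasureTheory.measure_biUnion_finset hdisj (fun w _ => hmeasA w)]
        rw [Finset.sum_congr rfl (fun w _ => Aset_volume n i m hn hi hm w),
          Finset.sum_const, nsmul_eq_mul]
      calc ENNReal.ofReal (x - 1 / 3 ^ m) ≤ ENNReal.ofReal ((K : ℝ) * (1 / 3 ^ m)) := by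
            apply ENNReal.ofReal_le_ofReal
            rw [mul_one_div, le_div_iff₀ h3m]
            have hone : (1/3^m:ℝ) * 3^m = 1 := by field_simp
            nlinarith [hK_gt]
        _ = (K : ℝ≥0∞) * ENNReal.ofReal (1 / 3 ^ m) := by
            rw [ENNReal.ofReal_mul (by positivity), ENNReal.ofReal_natCast]
        _ = MeasureTheory.volume (⋃ w ∈ L, Aset n i m w) := by rw [hvol1, hLcard]
        _ ≤ MeasureTheory.volume T := MeasureTheory.measure_mono hsub1
    · -- upper bound
      have hsub2 : T ⊆ ⋃ w ∈ U, Aset n i m w := by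
        rintro t ⟨ht, htx⟩
        rw [Set.mem_iUnion₂]
        refine ⟨fun j => ⟨outD n i (j : ℕ) (ternaryDigit t),
          lt_of_le_of_lt (outD_le n i _ _ (fun k => ternaryDigit_le t k)) (by norm_num)⟩,
          ?_, mem_Aset_self n i m ht⟩
        rw [hU, Finset.mem_filter]
        refine ⟨Finset.mem_univ _, ?_⟩
        have hb := (Aset_bounds n i m _ (mem_Aset_self n i m ht)).1
        rw [div_le_iff₀ h3m] at hb
        calc (cF _ : ℝ) ≤ peanoCoord n i t * 3 ^ m := hb
          _ ≤ x * 3 ^ m := by nlinarith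
      have hvol2 : MeasureTheory.volume (⋃ w ∈ U, Aset n i m w) =
          (U.card : ℝ≥0∞) * ENNReal.ofReal (1 / 3 ^ m) := by
        rw [MeasureTheory.measure_biUnion_finset hdisjU (fun w _ => hmeasA w)]
        rw [Finset.sum_congr rfl (fun w _ => Aset_volume n i m hn hi hm w),
          Finset.sum_const, nsmul_eq_mul]
      calc MeasureTheory.volume T ≤ MeasureTheory.volume (⋃ w ∈ U, Aset n i m w) :=
            MeasureTheory.measure_mono hsub2
        _ = (U.card : ℝ≥0∞) * ENNReal.ofReal (1 / 3 ^ m) := hvol2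
        _ ≤ ((K + 1 : ℕ) : ℝ≥0∞) * ENNReal.ofReal (1 / 3 ^ m) := by
            apply mul_le_mul_left
            exact_mod_cast hUcard
        _ = ENNReal.ofReal (((K : ℝ) + 1) * (1 / 3 ^ m)) := by
            rw [ENNReal.ofReal_mul (by positivity)]
            congr 1
            rw [show ((K:ℝ) + 1) = ((K + 1 : ℕ) : ℝ) by push_cast; ring, ENNReal.ofReal_natCast]
        _ ≤ ENNReal.ofReal (x + 1 / 3 ^ m) := by
            apply ENNReal.ofReal_le_ofReal
            rw [mul_one_div, div_le_iff₀ h3m]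
            have hone : (1/3^m:ℝ) * 3^m = 1 := by field_simp
            nlinarith [hK_le]
  have hT_fin : MeasureTheory.volume T ≤ 1 := by
    calc MeasureTheory.volume T ≤ MeasureTheory.volume (Set.Ico (0:ℝ) 1) :=
          MeasureTheory.measure_mono (fun t ht => ht.1)
      _ = 1 := by rw [Real.volume_Ico]; norm_num
  have hsmall : ∀ ε : ℝ, 0 < ε → ∃ m : ℕ, 1 ≤ m ∧ (1 / 3 ^ m : ℝ) < ε := by
    intro ε hε
    obtain ⟨M, hM⟩ := exists_pow_lt_of_lt_one hε (show (1/3 : ℝ) < 1 by norm_num)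
    refine ⟨M + 1, by omega, ?_⟩
    have h1 : ((1:ℝ)/3) ^ (M + 1) ≤ (1/3) ^ M := by
      apply pow_le_pow_of_le_one (by norm_num) (by norm_num) (by omega)
    have h2 : ((1:ℝ)/3) ^ (M+1) = 1 / 3 ^ (M+1) := by rw [div_pow, one_pow]
    linarith [hM, h2 ▸ h1]
  apply le_antisymm
  · apply ENNReal.le_of_forall_pos_le_add
    intro ε hε _
    obtain ⟨m, hm1, hm2⟩ := hsmall ε hε
    calc MeasureTheory.volume T ≤ ENNReal.ofReal (x + 1 / 3 ^ m) := (key m hm1).2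
      _ ≤ ENNReal.ofReal x + ENNReal.ofReal (1 / 3 ^ m) := ENNReal.ofReal_add_le
      _ ≤ ENNReal.ofReal x + ε := by
          apply add_le_add_right
          rw [← ENNReal.ofReal_coe_nnreal]
          exact ENNReal.ofReal_le_ofReal hm2.le
  · apply ENNReal.le_of_forall_pos_le_add
    intro ε hε _
    obtain ⟨m, hm1, hm2⟩ := hsmall ε hε
    calc ENNReal.ofReal x = ENNReal.ofReal ((x - 1/3^m) + 1/3^m) := by congr 1; ring
      _ ≤ ENNReal.ofReal (x - 1/3^m) + ENNReal.ofReal (1/3^m) := ENNReal.ofReal_add_le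
      _ ≤ MeasureTheory.volume T + ε := by
          apply add_le_add (key m hm1).1
          rw [← ENNReal.ofReal_coe_nnreal]
          exact ENNReal.ofReal_le_ofReal hm2.le


/-- each `x_i` is uniformly distributed: the pushforward of Lebesgue
measure on `[0,1]` under `x_i` is Lebesgue measure on `[0,1]`. -/
theorem peanoCoord_uniformly_distributed (n i : ℕ) (hn : 2 ≤ n) (hi1 : 1 ≤ i) (hin : i ≤ n) :
    MeasureTheory.Measure.map (peanoCoord n i)
        (MeasureTheory.volume.restrict (Set.Icc (0 : ℝ) 1)) =
      MeasureTheory.volume.restrict (Set.Icc (0 : ℝ) 1) := by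
  have hn1 : 1 ≤ n := by omega
  have hmeas := measurable_peanoCoord n i
  haveI hfin : MeasureTheory.IsFiniteMeasure
      (MeasureTheory.Measure.map (peanoCoord n i)
        (MeasureTheory.volume.restrict (Set.Icc (0 : ℝ) 1))) := by
    constructor
    rw [MeasureTheory.Measure.map_apply hmeas MeasurableSet.univ, Set.preimage_univ,
      MeasureTheory.Measure.restrict_apply_univ, Real.volume_Icc]
    norm_num
  refine MeasureTheory.Measure.ext_of_Iic _ _ (fun a => ?_)
  rw [MeasureTheory.Measure.map_apply hmeas measurableSet_Iic,
    MeasureTheory.Measure.restrict_apply (hmeas measurableSet_Iic),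
    MeasureTheory.Measure.restrict_apply measurableSet_Iic]
  have hIco : ∀ B : Set ℝ, MeasureTheory.volume (B ∩ Set.Icc 0 1) =
      MeasureTheory.volume (B ∩ Set.Ico 0 1) := by
    intro B
    apply le_antisymm
    · have h1 : B ∩ Set.Icc 0 1 ⊆ (B ∩ Set.Ico 0 1) ∪ {1} := by
        rintro t ⟨hB, h0, h1'⟩
        rcases lt_or_eq_of_le h1' with h | h
        · exact Or.inl ⟨hB, h0, h⟩
        · exact Or.inr (by simp [h])
      calc MeasureTheory.volume (B ∩ Set.Icc 0 1)
          ≤ MeasureTheory.volume ((B ∩ Set.Ico 0 1) ∪ {1}) := MeasureTheory.measure_mono h1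
        _ ≤ MeasureTheory.volume (B ∩ Set.Ico 0 1) + MeasureTheory.volume {1} :=
            MeasureTheory.measure_union_le _ _
        _ = MeasureTheory.volume (B ∩ Set.Ico 0 1) := by rw [Real.volume_singleton, add_zero]
    · exact MeasureTheory.measure_mono
        (Set.inter_subset_inter_right B Set.Ico_subset_Icc_self)
  rw [hIco, hIco]
  rcases lt_or_ge a 0 with ha | ha
  · have h1 : peanoCoord n i ⁻¹' (Set.Iic a) ∩ Set.Ico 0 1 = ∅ := by
      rw [Set.eq_empty_iff_forall_notMem]
      rintro t ⟨hta, _⟩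
      rw [Set.mem_preimage, Set.mem_Iic] at hta
      linarith [peanoCoord_nonneg n i t]
    have h2 : Set.Iic a ∩ Set.Ico (0:ℝ) 1 = ∅ := by
      rw [Set.eq_empty_iff_forall_notMem]
      rintro t ⟨hta, ht0, _⟩
      rw [Set.mem_Iic] at hta
      linarith
    rw [h1, h2]
  · set x' := min a 1 with hx'
    have hx'0 : 0 ≤ x' := le_min ha zero_le_one
    have hx'1 : x' ≤ 1 := min_le_right a 1
    have h1 : peanoCoord n i ⁻¹' (Set.Iic a) ∩ Set.Ico 0 1 =
        {t : ℝ | t ∈ Set.Ico (0:ℝ) 1 ∧ peanoCoord n i t ≤ x'} := by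
      ext t
      simp only [Set.mem_inter_iff, Set.mem_preimage, Set.mem_Iic, Set.mem_setOf_eq]
      constructor
      · rintro ⟨hta, htI⟩
        exact ⟨htI, le_min hta (peanoCoord_le_one n i t)⟩
      · rintro ⟨htI, htx⟩
        exact ⟨le_trans htx (min_le_left a 1), htI⟩
    have h2 : MeasureTheory.volume (Set.Iic a ∩ Set.Ico (0:ℝ) 1) = ENNReal.ofReal x' := by
      rcases le_or_gt 1 a with h | h
      · have heq : Set.Iic a ∩ Set.Ico (0:ℝ) 1 = Set.Ico (0:ℝ) 1 := by
          ext t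
          simp only [Set.mem_inter_iff, Set.mem_Iic, Set.mem_Ico]
          constructor
          · rintro ⟨_, ht⟩; exact ht
          · rintro ⟨ht0, ht1⟩; exact ⟨by linarith, ht0, ht1⟩
        rw [heq, Real.volume_Ico, hx', min_eq_right h]
        norm_num
      · have heq : Set.Iic a ∩ Set.Ico (0:ℝ) 1 = Set.Icc (0:ℝ) a := by
          ext t
          simp only [Set.mem_inter_iff, Set.mem_Iic, Set.mem_Ico, Set.mem_Icc]
          constructor
          · rintro ⟨hta, ht0, _⟩; exact ⟨ht0, hta⟩
          · rintro ⟨ht0, hta⟩; exact ⟨hta, ht0, lt_of_le_of_lt hta h⟩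
        rw [heq, Real.volume_Icc, hx', min_eq_left h.le]
        norm_num
    rw [h1, h2, cdf_peanoCoord n i hn1 hi1 hx'0 hx'1]
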